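/- Relation (iii) of the generalized-tie relations in the tied pseudo braid monoid: for every n ≥ 2 and all indices 2 ≤ i < j ≤ n, the equality p_{i−1} η_{i,j} = η_{i−1,j} p_{i−1} holds in the tied pseudo braid monoid TPM_n. -/

import Mathlib

/-!
The tied pseudo braid monoid `TPM n` (n ≥ 2), presented by generators
σ_1,…,σ_{n−1}, σ_1⁻¹,…,σ_{n−1}⁻¹, p_1,…,p_{n−1}, η_1,…,η_{n−1} subject to the
relations listed in the inductive `TPMRel` below.
-/

/-- Generators of the tied pseudo braid monoid: σ_i, σ_i⁻¹, p_i and η_i for 1 ≤ i ≤ n−1. -/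
inductive TPMGen (n : ℕ) : Type
  | sig (i : ℕ) (h : 1 ≤ i ∧ i ≤ n - 1) : TPMGen n
  | sigInv (i : ℕ) (h : 1 ≤ i ∧ i ≤ n - 1) : TPMGen n
  | p (i : ℕ) (h : 1 ≤ i ∧ i ≤ n - 1) : TPMGen n
  | eta (i : ℕ) (h : 1 ≤ i ∧ i ≤ n - 1) : TPMGen n

/-- The word σ_i in the free monoid on the generators. -/
def wS (n i : ℕ) : FreeMonoid (TPMGen n) :=
  if h : 1 ≤ i ∧ i ≤ n - 1 then FreeMonoid.of (TPMGen.sig i h) else 1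

/-- The word σ_i⁻¹ in the free monoid on the generators. -/
def wSI (n i : ℕ) : FreeMonoid (TPMGen n) :=
  if h : 1 ≤ i ∧ i ≤ n - 1 then FreeMonoid.of (TPMGen.sigInv i h) else 1

/-- The word p_i in the free monoid on the generators. -/
def wP (n i : ℕ) : FreeMonoid (TPMGen n) :=
  if h : 1 ≤ i ∧ i ≤ n - 1 then FreeMonoid.of (TPMGen.p i h) else 1

/-- The word η_i in the free monoid on the generators. -/
def wE (n i : ℕ) : FreeMonoid (TPMGen n) :=
  if h : 1 ≤ i ∧ i ≤ n - 1 then FreeMonoid.of (TPMGen.eta i h) else 1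

/-- The defining relations of the tied pseudo braid monoid `TPM n`. -/
inductive TPMRel (n : ℕ) : FreeMonoid (TPMGen n) → FreeMonoid (TPMGen n) → Prop
  /- σ_i σ_i⁻¹ = σ_i⁻¹ σ_i = 1 -/
  | inv_right (i : ℕ) (h : 1 ≤ i ∧ i ≤ n - 1) :
      TPMRel n (wS n i * wSI n i) 1
  | inv_left (i : ℕ) (h : 1 ≤ i ∧ i ≤ n - 1) :
      TPMRel n (wSI n i * wS n i) 1
  /- σ_i σ_{i+1} σ_i = σ_{i+1} σ_i σ_{i+1} -/
  | braid (i : ℕ) (h : 1 ≤ i ∧ i + 1 ≤ n - 1) :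
      TPMRel n (wS n i * wS n (i+1) * wS n i) (wS n (i+1) * wS n i * wS n (i+1))
  /- σ_i σ_j = σ_j σ_i for |i−j| ≥ 2 -/
  | sig_comm (i j : ℕ) (hi : 1 ≤ i ∧ i ≤ n - 1) (hj : 1 ≤ j ∧ j ≤ n - 1)
      (hij : i + 2 ≤ j ∨ j + 2 ≤ i) :
      TPMRel n (wS n i * wS n j) (wS n j * wS n i)
  /- p_i p_j = p_j p_i for |i−j| ≥ 2 -/
  | p_comm (i j : ℕ) (hi : 1 ≤ i ∧ i ≤ n - 1) (hj : 1 ≤ j ∧ j ≤ n - 1)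
      (hij : i + 2 ≤ j ∨ j + 2 ≤ i) :
      TPMRel n (wP n i * wP n j) (wP n j * wP n i)
  /- p_i σ_j^{±1} = σ_j^{±1} p_i for |i−j| ≥ 2 -/
  | p_sig_far_pos (i j : ℕ) (hi : 1 ≤ i ∧ i ≤ n - 1) (hj : 1 ≤ j ∧ j ≤ n - 1)
      (hij : i + 2 ≤ j ∨ j + 2 ≤ i) :
      TPMRel n (wP n i * wS n j) (wS n j * wP n i)
  | p_sig_far_neg (i j : ℕ) (hi : 1 ≤ i ∧ i ≤ n - 1) (hj : 1 ≤ j ∧ j ≤ n - 1)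
      (hij : i + 2 ≤ j ∨ j + 2 ≤ i) :
      TPMRel n (wP n i * wSI n j) (wSI n j * wP n i)
  /- p_i σ_i^{±1} = σ_i^{±1} p_i -/
  | p_sig_pos (i : ℕ) (h : 1 ≤ i ∧ i ≤ n - 1) :
      TPMRel n (wP n i * wS n i) (wS n i * wP n i)
  | p_sig_neg (i : ℕ) (h : 1 ≤ i ∧ i ≤ n - 1) :
      TPMRel n (wP n i * wSI n i) (wSI n i * wP n i)
  /- σ_i σ_{i+1} p_i = p_{i+1} σ_i σ_{i+1} -/
  | ssp (i : ℕ) (h : 1 ≤ i ∧ i + 1 ≤ n - 1) :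
      TPMRel n (wS n i * wS n (i+1) * wP n i) (wP n (i+1) * wS n i * wS n (i+1))
  /- σ_{i+1} σ_i p_{i+1} = p_i σ_{i+1} σ_i -/
  | ssp' (i : ℕ) (h : 1 ≤ i ∧ i + 1 ≤ n - 1) :
      TPMRel n (wS n (i+1) * wS n i * wP n (i+1)) (wP n i * wS n (i+1) * wS n i)
  /- η_i η_j = η_j η_i for all i, j -/
  | eta_comm (i j : ℕ) (hi : 1 ≤ i ∧ i ≤ n - 1) (hj : 1 ≤ j ∧ j ≤ n - 1) :
      TPMRel n (wE n i * wE n j) (wE n j * wE n i)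
  /- η_i σ_i = σ_i η_i -/
  | eta_sig (i : ℕ) (h : 1 ≤ i ∧ i ≤ n - 1) :
      TPMRel n (wE n i * wS n i) (wS n i * wE n i)
  /- η_i σ_j = σ_j η_i for |i−j| ≥ 2 -/
  | eta_sig_far (i j : ℕ) (hi : 1 ≤ i ∧ i ≤ n - 1) (hj : 1 ≤ j ∧ j ≤ n - 1)
      (hij : i + 2 ≤ j ∨ j + 2 ≤ i) :
      TPMRel n (wE n i * wS n j) (wS n j * wE n i)
  /- η_i σ_j σ_i^ε = σ_j σ_i^ε η_j for |i−j| = 1, ε = ±1 -/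
  | eta_slide_pos (i j : ℕ) (hi : 1 ≤ i ∧ i ≤ n - 1) (hj : 1 ≤ j ∧ j ≤ n - 1)
      (hij : j = i + 1 ∨ i = j + 1) :
      TPMRel n (wE n i * wS n j * wS n i) (wS n j * wS n i * wE n j)
  | eta_slide_neg (i j : ℕ) (hi : 1 ≤ i ∧ i ≤ n - 1) (hj : 1 ≤ j ∧ j ≤ n - 1)
      (hij : j = i + 1 ∨ i = j + 1) :
      TPMRel n (wE n i * wS n j * wSI n i) (wS n j * wSI n i * wE n j)
  /- η_i η_j σ_i = η_j σ_i η_j = σ_i η_i η_j for |i−j| = 1 -/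
  | eta_eta_sig₁ (i j : ℕ) (hi : 1 ≤ i ∧ i ≤ n - 1) (hj : 1 ≤ j ∧ j ≤ n - 1)
      (hij : j = i + 1 ∨ i = j + 1) :
      TPMRel n (wE n i * wE n j * wS n i) (wE n j * wS n i * wE n j)
  | eta_eta_sig₂ (i j : ℕ) (hi : 1 ≤ i ∧ i ≤ n - 1) (hj : 1 ≤ j ∧ j ≤ n - 1)
      (hij : j = i + 1 ∨ i = j + 1) :
      TPMRel n (wE n j * wS n i * wE n j) (wS n i * wE n i * wE n j)
  /- η_i² = η_i -/
  | eta_idem (i : ℕ) (h : 1 ≤ i ∧ i ≤ n - 1) :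
      TPMRel n (wE n i * wE n i) (wE n i)
  /- p_i η_i = η_i p_i -/
  | p_eta (i : ℕ) (h : 1 ≤ i ∧ i ≤ n - 1) :
      TPMRel n (wP n i * wE n i) (wE n i * wP n i)
  /- p_i η_j = η_j p_i for |i−j| ≥ 2 -/
  | p_eta_far (i j : ℕ) (hi : 1 ≤ i ∧ i ≤ n - 1) (hj : 1 ≤ j ∧ j ≤ n - 1)
      (hij : i + 2 ≤ j ∨ j + 2 ≤ i) :
      TPMRel n (wP n i * wE n j) (wE n j * wP n i)
  /- η_i p_j p_i = p_j p_i η_j for |i−j| = 1 -/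
  | eta_pp (i j : ℕ) (hi : 1 ≤ i ∧ i ≤ n - 1) (hj : 1 ≤ j ∧ j ≤ n - 1)
      (hij : j = i + 1 ∨ i = j + 1) :
      TPMRel n (wE n i * wP n j * wP n i) (wP n j * wP n i * wE n j)
  /- η_i η_j p_i = η_j p_i η_j = p_i η_i η_j for |i−j| = 1 -/
  | eta_eta_p₁ (i j : ℕ) (hi : 1 ≤ i ∧ i ≤ n - 1) (hj : 1 ≤ j ∧ j ≤ n - 1)
      (hij : j = i + 1 ∨ i = j + 1) :
      TPMRel n (wE n i * wE n j * wP n i) (wE n j * wP n i * wE n j)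
  | eta_eta_p₂ (i j : ℕ) (hi : 1 ≤ i ∧ i ≤ n - 1) (hj : 1 ≤ j ∧ j ≤ n - 1)
      (hij : j = i + 1 ∨ i = j + 1) :
      TPMRel n (wE n j * wP n i * wE n j) (wP n i * wE n i * wE n j)
  /- η_i p_j σ_i = p_j σ_i η_j for |i−j| = 1 -/
  | eta_ps (i j : ℕ) (hi : 1 ≤ i ∧ i ≤ n - 1) (hj : 1 ≤ j ∧ j ≤ n - 1)
      (hij : j = i + 1 ∨ i = j + 1) :
      TPMRel n (wE n i * wP n j * wS n i) (wP n j * wS n i * wE n j)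
  /- η_i σ_j p_i = σ_j p_i η_j for |i−j| = 1 -/
  | eta_sp (i j : ℕ) (hi : 1 ≤ i ∧ i ≤ n - 1) (hj : 1 ≤ j ∧ j ≤ n - 1)
      (hij : j = i + 1 ∨ i = j + 1) :
      TPMRel n (wE n i * wS n j * wP n i) (wS n j * wP n i * wE n j)
  /- p_i η_j = σ_i η_j σ_i⁻¹ p_i for |i−j| = 1 -/
  | p_eta_conj (i j : ℕ) (hi : 1 ≤ i ∧ i ≤ n - 1) (hj : 1 ≤ j ∧ j ≤ n - 1)
      (hij : j = i + 1 ∨ i = j + 1) :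
      TPMRel n (wP n i * wE n j) (wS n i * wE n j * wSI n i * wP n i)

/-- The tied pseudo braid monoid `TPM n`: the quotient of the free monoid on the
generators by the congruence generated by the defining relations. -/
def TPM (n : ℕ) := (conGen (TPMRel n)).Quotient

instance (n : ℕ) : Monoid (TPM n) :=
  inferInstanceAs (Monoid ((conGen (TPMRel n)).Quotient))

/-- The generator σ_i of `TPM n` (defined for 1 ≤ i ≤ n−1; junk value 1 otherwise). -/
def TPM.s (n i : ℕ) : TPM n := (conGen (TPMRel n)).mk' (wS n i)

/-- The generator σ_i⁻¹ of `TPM n` (defined for 1 ≤ i ≤ n−1; junk value 1 otherwise). -/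
def TPM.sInv (n i : ℕ) : TPM n := (conGen (TPMRel n)).mk' (wSI n i)

/-- The generator p_i of `TPM n` (defined for 1 ≤ i ≤ n−1; junk value 1 otherwise). -/
def TPM.p (n i : ℕ) : TPM n := (conGen (TPMRel n)).mk' (wP n i)

/-- The generator η_i of `TPM n` (defined for 1 ≤ i ≤ n−1; junk value 1 otherwise). -/
def TPM.e (n i : ℕ) : TPM n := (conGen (TPMRel n)).mk' (wE n i)

/-- The generalized tie η_{i,j} = σ_i σ_{i+1} ⋯ σ_{j−2} η_{j−1} σ_{j−2}⁻¹ ⋯ σ_{i+1}⁻¹ σ_i⁻¹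
in `TPM n`, for 1 ≤ i < j ≤ n (in particular η_{i,i+1} = η_i). -/
def TPM.genTie (n i j : ℕ) : TPM n :=
  (((List.range' i (j - 1 - i)).map (TPM.s n)).prod) * TPM.e n (j - 1) *
    (((List.range' i (j - 1 - i)).reverse.map (TPM.sInv n)).prod)

/-
Write `W = σ_i σ_{i+1} ⋯ σ_{j−2}`, a unit of `TPM n`, so that `η_{i,j} = W η_{j−1} W⁻¹`. The
relation `η_k σ_{k+1} σ_k = σ_{k+1} σ_k η_{k+1}` gives `σ_k η_{k+1} σ_k⁻¹ = σ_{k+1}⁻¹ η_k σ_{k+1}`,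
and pushing this through `W` rewrites `η_{i,j} = V⁻¹ η_i V` with `V = σ_{i+1} ⋯ σ_{j−1}`. Every
letter of `V` is far from `i − 1`, so `p_{i−1}` and `σ_{i−1}^{±1}` commute with `V`, and conjugating
the defining relation `p_{i−1} η_i = σ_{i−1} η_i σ_{i−1}⁻¹ p_{i−1}` by `V` gives
`p_{i−1} η_{i,j} = σ_{i−1} η_{i,j} σ_{i−1}⁻¹ p_{i−1} = η_{i−1,j} p_{i−1}`.
-/

namespace TPM

variable {n : ℕ}

lemma mk_eq_of_rel {a b : FreeMonoid (TPMGen n)} (h : TPMRel n a b) :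
    ((conGen (TPMRel n)).mk' a : TPM n) = (conGen (TPMRel n)).mk' b :=
  (Con.eq _).2 (ConGen.Rel.of a b h)

-- Out-of-range generators are `1`, so the relations below need no range hypotheses.
lemma s_eq_one {i : ℕ} (h : ¬(1 ≤ i ∧ i ≤ n - 1)) : s n i = 1 := by
  rw [s, wS, dif_neg h]
  exact map_one _

lemma sInv_eq_one {i : ℕ} (h : ¬(1 ≤ i ∧ i ≤ n - 1)) : sInv n i = 1 := by
  rw [sInv, wSI, dif_neg h]
  exact map_one _

lemma p_eq_one {i : ℕ} (h : ¬(1 ≤ i ∧ i ≤ n - 1)) : p n i = 1 := by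
  rw [p, wP, dif_neg h]
  exact map_one _

lemma e_eq_one {i : ℕ} (h : ¬(1 ≤ i ∧ i ≤ n - 1)) : e n i = 1 := by
  rw [e, wE, dif_neg h]
  exact map_one _

lemma s_mul_sInv (i : ℕ) : s n i * sInv n i = 1 := by
  by_cases h : 1 ≤ i ∧ i ≤ n - 1
  · exact mk_eq_of_rel (.inv_right i h)
  · rw [s_eq_one h, sInv_eq_one h, one_mul]

lemma sInv_mul_s (i : ℕ) : sInv n i * s n i = 1 := by
  by_cases h : 1 ≤ i ∧ i ≤ n - 1
  · exact mk_eq_of_rel (.inv_left i h)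
  · rw [s_eq_one h, sInv_eq_one h, one_mul]

def sUnit (n i : ℕ) : (TPM n)ˣ := ⟨s n i, sInv n i, s_mul_sInv i, sInv_mul_s i⟩

@[simp] lemma coe_sUnit (i : ℕ) : (sUnit n i : TPM n) = s n i := rfl

@[simp] lemma coe_sUnit_inv (i : ℕ) : (↑(sUnit n i)⁻¹ : TPM n) = sInv n i := rfl

lemma commute_s_s {i j : ℕ} (hij : i + 2 ≤ j ∨ j + 2 ≤ i) : Commute (s n i) (s n j) := by
  by_cases hi : 1 ≤ i ∧ i ≤ n - 1
  · by_cases hj : 1 ≤ j ∧ j ≤ n - 1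
    · exact mk_eq_of_rel (.sig_comm i j hi hj hij)
    · rw [s_eq_one hj]; exact Commute.one_right _
  · rw [s_eq_one hi]; exact Commute.one_left _

lemma commute_p_s {i j : ℕ} (hij : i + 2 ≤ j ∨ j + 2 ≤ i) : Commute (p n i) (s n j) := by
  by_cases hi : 1 ≤ i ∧ i ≤ n - 1
  · by_cases hj : 1 ≤ j ∧ j ≤ n - 1
    · exact mk_eq_of_rel (.p_sig_far_pos i j hi hj hij)
    · rw [s_eq_one hj]; exact Commute.one_right _
  · rw [p_eq_one hi]; exact Commute.one_left _

lemma p_mul_e_succ (i : ℕ) : p n i * e n (i + 1) = s n i * e n (i + 1) * sInv n i * p n i := by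
  by_cases hi : 1 ≤ i ∧ i ≤ n - 1
  · by_cases hi' : 1 ≤ i + 1 ∧ i + 1 ≤ n - 1
    · exact mk_eq_of_rel (.p_eta_conj i (i + 1) hi hi' (.inl rfl))
    · rw [e_eq_one hi', mul_one, mul_one, s_mul_sInv, one_mul]
  · rw [p_eq_one hi, s_eq_one hi, sInv_eq_one hi]; simp

lemma sInv_mul_e_mul_s {i : ℕ} (hi : 1 ≤ i) (hin : i + 2 ≤ n) :
    sInv n (i + 1) * e n i * s n (i + 1) = s n i * e n (i + 1) * sInv n i := by
  have slide : e n i * s n (i + 1) * s n i = s n (i + 1) * s n i * e n (i + 1) :=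
    mk_eq_of_rel (.eta_slide_pos i (i + 1) ⟨hi, by omega⟩ ⟨by omega, by omega⟩ (.inl rfl))
  calc sInv n (i + 1) * e n i * s n (i + 1)
      = sInv n (i + 1) * e n i * s n (i + 1) * (s n i * sInv n i) := by
        rw [s_mul_sInv, mul_one]
    _ = sInv n (i + 1) * (e n i * s n (i + 1) * s n i) * sInv n i := by simp only [mul_assoc]
    _ = sInv n (i + 1) * s n (i + 1) * (s n i * e n (i + 1) * sInv n i) := by
        rw [slide]; simp only [mul_assoc]
    _ = s n i * e n (i + 1) * sInv n i := by rw [sInv_mul_s, one_mul]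

def sWord (n i m : ℕ) : (TPM n)ˣ := ((List.range' i m).map (sUnit n)).prod

lemma coe_sWord (i m : ℕ) : (sWord n i m : TPM n) = ((List.range' i m).map (s n)).prod := by
  rw [sWord, ← Units.coeHom_apply, map_list_prod, List.map_map]
  rfl

lemma coe_sWord_inv (i m : ℕ) :
    (↑(sWord n i m)⁻¹ : TPM n) = ((List.range' i m).reverse.map (sInv n)).prod := by
  simp only [sWord, List.prod_inv_reverse, ← Units.coeHom_apply, map_list_prod, List.map_reverse,
    List.map_map]
  rfl

lemma sWord_succ (i m : ℕ) : sWord n i (m + 1) = sWord n i m * sUnit n (i + m) := by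
  rw [sWord, sWord, List.range'_1_concat, List.map_append, List.prod_append, List.map_singleton,
    List.prod_singleton]

lemma sWord_succ' (i m : ℕ) : sWord n i (m + 1) = sUnit n i * sWord n (i + 1) m := by
  rw [sWord, sWord, List.range'_succ, List.map_cons, List.prod_cons]

lemma commute_sWord {x : TPM n} {i m : ℕ} (h : ∀ k, i ≤ k → k < i + m → Commute x (s n k)) :
    Commute x (sWord n i m) := by
  rw [coe_sWord]
  refine Commute.list_prod_right _ _ fun y hy => ?_
  obtain ⟨k, hk, rfl⟩ := List.mem_map.1 hy
  exact h k (List.mem_range'_1.1 hk).1 (List.mem_range'_1.1 hk).2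

lemma genTie_add_add_one (i m : ℕ) :
    genTie n i (i + m + 1) = sWord n i m * e n (i + m) * ↑(sWord n i m)⁻¹ := by
  rw [genTie, show i + m + 1 - 1 - i = m by omega, show i + m + 1 - 1 = i + m by omega,
    coe_sWord, coe_sWord_inv]

lemma s_mul_genTie_succ_mul_sInv {i j : ℕ} (hij : i + 1 < j) :
    s n i * genTie n (i + 1) j * sInv n i = genTie n i j := by
  obtain ⟨m, rfl⟩ : ∃ m, j = i + 1 + m + 1 := ⟨j - i - 2, by omega⟩
  rw [genTie_add_add_one (i + 1) m, show i + 1 + m + 1 = i + (m + 1) + 1 by omega,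
    genTie_add_add_one i (m + 1), sWord_succ', show i + (m + 1) = i + 1 + m by omega]
  simp only [Units.val_mul, mul_inv_rev, coe_sUnit, coe_sUnit_inv, mul_assoc]

lemma genTie_add_add_two {i m : ℕ} (hi : 1 ≤ i) (hn : i + m + 2 ≤ n) :
    genTie n i (i + m + 2) = sInv n (i + m + 1) * genTie n i (i + m + 1) * s n (i + m + 1) := by
  have hw : Commute (s n (i + m + 1)) (sWord n i m) :=
    commute_sWord fun k _ hk => commute_s_s (.inr (by omega))
  have hw' : Commute (sInv n (i + m + 1)) (sWord n i m) := hw.units_inv_left (u := sUnit n _)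
  rw [show i + m + 2 = i + (m + 1) + 1 by omega, genTie_add_add_one i (m + 1),
    genTie_add_add_one i m, sWord_succ]
  simp only [Units.val_mul, mul_inv_rev, coe_sUnit, coe_sUnit_inv]
  set W := sWord n i m
  calc (W : TPM n) * s n (i + m) * e n (i + m + 1) * (sInv n (i + m) * ↑W⁻¹)
      = W * (s n (i + m) * e n (i + m + 1) * sInv n (i + m)) * ↑W⁻¹ := by
        simp only [mul_assoc]
    _ = W * sInv n (i + m + 1) * e n (i + m) * (s n (i + m + 1) * ↑W⁻¹) := by
        rw [← sInv_mul_e_mul_s (by omega) hn]; simp only [mul_assoc]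
    _ = sInv n (i + m + 1) * (W * e n (i + m) * ↑W⁻¹) * s n (i + m + 1) := by
        rw [← hw'.eq, hw.units_inv_right.eq]; simp only [mul_assoc]

lemma genTie_add_add_one_eq_conj_e {i m : ℕ} (hi : 1 ≤ i) (hn : i + m + 1 ≤ n) :
    genTie n i (i + m + 1) = ↑(sWord n (i + 1) m)⁻¹ * e n i * sWord n (i + 1) m := by
  induction m with
  | zero => simpa [sWord] using genTie_add_add_one (n := n) i 0
  | succ m ih =>
    rw [show i + (m + 1) + 1 = i + m + 2 by omega, genTie_add_add_two hi hn, ih (by omega),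
      sWord_succ, show i + 1 + m = i + m + 1 by omega]
    simp only [Units.val_mul, mul_inv_rev, coe_sUnit, coe_sUnit_inv, mul_assoc]

lemma p_mul_genTie_succ {k m : ℕ} (hn : k + m + 2 ≤ n) :
    p n k * genTie n (k + 1) (k + 1 + m + 1) =
      s n k * genTie n (k + 1) (k + 1 + m + 1) * sInv n k * p n k := by
  rw [genTie_add_add_one_eq_conj_e (by omega) (by omega)]
  set V := sWord n (k + 1 + 1) m
  have hp : Commute (p n k) V := commute_sWord fun l hl _ => commute_p_s (.inl (by omega))
  have hs : Commute (s n k) V := commute_sWord fun l hl _ => commute_s_s (.inl (by omega))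
  have hs' : Commute (sInv n k) V := hs.units_inv_left (u := sUnit n k)
  calc p n k * (↑V⁻¹ * e n (k + 1) * V)
      = ↑V⁻¹ * (p n k * e n (k + 1)) * V := by
        rw [← mul_assoc, ← mul_assoc, hp.units_inv_right.eq]; simp only [mul_assoc]
    _ = ↑V⁻¹ * s n k * e n (k + 1) * (sInv n k * (p n k * V)) := by
        rw [p_mul_e_succ]; simp only [mul_assoc]
    _ = s n k * (↑V⁻¹ * e n (k + 1) * V) * sInv n k * p n k := by
        rw [hp.eq, ← mul_assoc (sInv n k), hs'.eq, ← hs.units_inv_right.eq]; simp only [mul_assoc]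

end TPM

theorem tpm_genTie_rel_iii_general (n : ℕ) (i j : ℕ)
    (hi : 2 ≤ i) (hij : i < j) (hj : j ≤ n) :
    TPM.p n (i - 1) * TPM.genTie n i j = TPM.genTie n (i - 1) j * TPM.p n (i - 1) := by
  obtain ⟨k, rfl⟩ : ∃ k, i = k + 1 := ⟨i - 1, by omega⟩
  obtain ⟨m, rfl⟩ : ∃ m, j = k + 1 + m + 1 := ⟨j - k - 2, by omega⟩
  rw [Nat.add_sub_cancel, ← TPM.s_mul_genTie_succ_mul_sInv (i := k) (by omega),
    TPM.p_mul_genTie_succ (by omega)]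

/-- **Relation (iii) of the generalized-tie relations in `TPM n`**: for every n ≥ 2 and
indices 2 ≤ i < j ≤ n, p_{i−1} η_{i,j} = η_{i−1,j} p_{i−1} holds in `TPM n`. -/
theorem tpm_genTie_rel_iii (n : ℕ) (hn : 2 ≤ n) (i j : ℕ)
    (hi : 2 ≤ i) (hij : i < j) (hj : j ≤ n) :
    TPM.p n (i - 1) * TPM.genTie n i j = TPM.genTie n (i - 1) j * TPM.p n (i - 1) :=
  tpm_genTie_rel_iii_general n i j hi hij hj
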